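/- arXiv:2405.12252 — 4 statements merged into one kernel-verified Lean document; each statement's English description precedes it below -/
import Mathlib

section
/- Let θ > 0 and ε ∈ (0,1). Let x_1, …, x_m be distinct elements of V with prefixes X^i = {x_1, …, x_i} (X^0 = ∅) and write X = X^m; for e = x_i write X^{<e} = X^{i−1}. Assume f(x_i|X^{i−1}) ≥ θ·c(x_i) for every i. Let P ⊆ X and let Q ⊆ V \ X be such that every e ∈ Q satisfies f(e|X) ≤ θ·c(e)/(1−ε) and such that c(P) ≥ c(Q). Then Σ_{e∈P} f(e|X^{<e}) ≥ (1−ε)·Σ_{e∈Q} f(e|X). -/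
/-- The prefix set `X^i = {x_1, …, x_i}` (0-indexed: `{x 0, …, x (i-1)}`). -/
def prefSet {V : Type*} [DecidableEq V] (x : ℕ → V) (i : ℕ) : Finset V :=
  (Finset.range i).image x

/-- Let `θ > 0`, `ε ∈ (0,1)`, and distinct `x_1, …, x_m` with
`f(x_i|X^{i-1}) ≥ θ·c(x_i)` for every `i`, and `X = X^m`.  If `P ⊆ X`,
`Q ⊆ V \ X`, every `e ∈ Q` satisfies `f(e|X) ≤ θ·c(e)/(1−ε)`, and
`c(P) ≥ c(Q)`, then `Σ_{e∈P} f(e|X^{<e}) ≥ (1−ε)·Σ_{e∈Q} f(e|X)`. -/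
theorem smk_statement_4 {V : Type*} [Fintype V] [DecidableEq V]
    (f : Finset V → ℝ) (c : V → ℝ) (hc : ∀ e : V, 0 < c e)
    (θ ε : ℝ) (hθ : 0 < θ) (hε0 : 0 < ε) (hε1 : ε < 1)
    (m : ℕ) (x : ℕ → V) (hinj : Set.InjOn x (Set.Iio m))
    (hge : ∀ i < m,
      f (insert (x i) (prefSet x i)) - f (prefSet x i) ≥ θ * c (x i))
    (P Q : Finset V) (hP : P ⊆ prefSet x m) (hQ : Disjoint Q (prefSet x m))
    (hQbd : ∀ e ∈ Q,
      f (insert e (prefSet x m)) - f (prefSet x m) ≤ θ * c e / (1 - ε))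
    (hcost : ∑ e ∈ Q, c e ≤ ∑ e ∈ P, c e) :
    (1 - ε) * ∑ e ∈ Q, (f (insert e (prefSet x m)) - f (prefSet x m)) ≤
      ∑ i ∈ (Finset.range m).filter (fun i => x i ∈ P),
        (f (insert (x i) (prefSet x i)) - f (prefSet x i)) := by
  have hε : 0 < 1 - ε := by linarith
  have hPim : P = ((Finset.range m).filter (fun i => x i ∈ P)).image x := by
    apply Finset.Subset.antisymm
    · intro e he
      obtain ⟨i, hi, rfl⟩ := Finset.mem_image.mp (hP he)
      exact Finset.mem_image.mpr ⟨i, Finset.mem_filter.mpr ⟨hi, he⟩, rfl⟩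
    · intro e he
      obtain ⟨i, hi, rfl⟩ := Finset.mem_image.mp he
      exact (Finset.mem_filter.mp hi).2
  have hsum : ∑ e ∈ P, c e =
      ∑ i ∈ (Finset.range m).filter (fun i => x i ∈ P), c (x i) := by
    conv_lhs => rw [hPim]
    apply Finset.sum_image
    intro a ha b hb hab
    exact hinj (Finset.mem_range.mp (Finset.mem_filter.mp ha).1)
      (Finset.mem_range.mp (Finset.mem_filter.mp hb).1) hab
  calc (1 - ε) * ∑ e ∈ Q, (f (insert e (prefSet x m)) - f (prefSet x m))
      ≤ ∑ e ∈ Q, θ * c e := by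
        rw [Finset.mul_sum]
        apply Finset.sum_le_sum
        intro e he
        have := hQbd e he
        rw [mul_comm]
        calc (f (insert e (prefSet x m)) - f (prefSet x m)) * (1 - ε)
            ≤ θ * c e / (1 - ε) * (1 - ε) := by
              exact mul_le_mul_of_nonneg_right this hε.le
          _ = θ * c e := div_mul_cancel₀ _ hε.ne'
    _ = θ * ∑ e ∈ Q, c e := by rw [Finset.mul_sum]
    _ ≤ θ * ∑ e ∈ P, c e := by
        exact mul_le_mul_of_nonneg_left hcost hθ.le
    _ = ∑ i ∈ (Finset.range m).filter (fun i => x i ∈ P), θ * c (x i) := by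
        rw [hsum, Finset.mul_sum]
    _ ≤ _ := by
        apply Finset.sum_le_sum
        intro i hi
        exact hge i (Finset.mem_range.mp (Finset.mem_filter.mp hi).1)
end

section
/- Let ε ∈ (0,1) and θ_X, θ_Y > 0. Let x_1, …, x_p and y_1, …, y_q be distinct elements of V forming disjoint sets X = {x_1,…,x_p} and Y = {y_1,…,y_q}, with prefixes X^i = {x_1,…,x_i}, Y^j = {y_1,…,y_j}; for e = x_i write X^{<e} = X^{i−1} and for e = y_j write Y^{<e} = Y^{j−1}. Let O' ⊆ V. Assume: (i) f(x_i|X^{i−1}) ≥ θ_X·c(x_i) for every i and f(y_j|Y^{j−1}) ≥ θ_Y·c(y_j) for every j; (ii) every e ∈ O' ∩ Y satisfies f(e|X) ≤ f(e|Y^{<e}), and every e ∈ O' ∩ X satisfies f(e|Y) ≤ f(e|X^{<e}); (iii) every e ∈ O' \ (X ∪ Y) satisfies f(e|X) ≤ θ_X·c(e)/(1−ε) and f(e|Y) ≤ θ_Y·c(e)/(1−ε); (iv) c(X \ O') ≥ c(O' \ (X ∪ Y)) and c(Y \ O') ≥ c(O' \ (X ∪ Y)). Then f(O' ∪ X) −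 f(X) + f(O' ∪ Y) − f(Y) ≤ (f(X) + f(Y))/(1−ε). -/
section aux
variable {V : Type*} [DecidableEq V]

lemma prefSet_succ (y : ℕ → V) (j : ℕ) :
    prefSet y (j+1) = insert (y j) (prefSet y j) := by
  simp [prefSet, Finset.range_add_one]

lemma prefSet_telescope (f : Finset V → ℝ) (hnorm : f ∅ = 0) (y : ℕ → V) (q : ℕ) :
    f (prefSet y q) =
      ∑ j ∈ Finset.range q, (f (insert (y j) (prefSet y j)) - f (prefSet y j)) := by
  have h := Finset.sum_range_sub (fun j => f (prefSet y j)) q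
  simp only [prefSet_succ] at h
  rw [h]
  simp [prefSet, hnorm]

lemma submod_union_le (f : Finset V → ℝ)
    (hsub : ∀ A B : Finset V, A ⊆ B → ∀ e ∉ B,
      f (insert e A) - f A ≥ f (insert e B) - f B)
    (A S : Finset V) :
    f (A ∪ S) - f A ≤ ∑ e ∈ S \ A, (f (insert e A) - f A) := by
  induction S using Finset.induction_on with
  | empty => simp
  | @insert e S' he ih =>
    by_cases heA : e ∈ A
    · have h1 : A ∪ insert e S' = A ∪ S' := by
        rw [Finset.union_insert]
        exact Finset.insert_eq_self.mpr (Finset.mem_union_left _ heA)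
      have h2 : insert e S' \ A = S' \ A := by
        ext a
        simp only [Finset.mem_sdiff, Finset.mem_insert]
        constructor
        · rintro ⟨(rfl | h), hA⟩
          · exact absurd heA hA
          · exact ⟨h, hA⟩
        · rintro ⟨h, hA⟩
          exact ⟨Or.inr h, hA⟩
      rw [h1, h2]; exact ih
    · have h1 : A ∪ insert e S' = insert e (A ∪ S') := Finset.union_insert e A S'
      have h2 : insert e S' \ A = insert e (S' \ A) := by
        ext a
        simp only [Finset.mem_sdiff, Finset.mem_insert]
        constructor
        · rintro ⟨(rfl | h), hA⟩
          · exact Or.inl rfl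
          · exact Or.inr ⟨h, hA⟩
        · rintro (rfl | ⟨h, hA⟩)
          · exact ⟨Or.inl rfl, heA⟩
          · exact ⟨Or.inr h, hA⟩
      have hnot : e ∉ A ∪ S' := by simp [heA, he]
      have hs := hsub A (A ∪ S') Finset.subset_union_left e hnot
      rw [h1, h2, Finset.sum_insert (by simp [he])]
      linarith

lemma ge_theta_sum (f : Finset V → ℝ) (hnorm : f ∅ = 0) (c : V → ℝ)
    (hc : ∀ e, 0 < c e) (θ : ℝ) (hθ : 0 ≤ θ)
    (q : ℕ) (y : ℕ → V) (hinj : Set.InjOn y (Set.Iio q)) (O' : Finset V)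
    (hg : ∀ j < q, f (insert (y j) (prefSet y j)) - f (prefSet y j) ≥ θ * c (y j)) :
    θ * ∑ e ∈ prefSet y q \ O', c e ≤ f (prefSet y q) := by
  have himg : prefSet y q \ O' =
      ((Finset.range q).filter (fun j => y j ∉ O')).image y := by
    ext e
    simp only [Finset.mem_sdiff, Finset.mem_image, Finset.mem_filter,
      Finset.mem_range, prefSet]
    constructor
    · rintro ⟨⟨j, hj, rfl⟩, hO⟩
      exact ⟨j, ⟨hj, hO⟩, rfl⟩
    · rintro ⟨j, ⟨hj, hO⟩, rfl⟩
      exact ⟨⟨j, hj, rfl⟩, hO⟩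
  have hinjT : ∀ a ∈ (Finset.range q).filter (fun j => y j ∉ O'),
      ∀ b ∈ (Finset.range q).filter (fun j => y j ∉ O'), y a = y b → a = b := by
    intro a ha b hb h
    simp only [Finset.mem_filter, Finset.mem_range] at ha hb
    exact hinj (by simpa using ha.1) (by simpa using hb.1) h
  rw [himg, Finset.sum_image hinjT, prefSet_telescope f hnorm]
  calc θ * ∑ j ∈ (Finset.range q).filter (fun j => y j ∉ O'), c (y j)
      = ∑ j ∈ (Finset.range q).filter (fun j => y j ∉ O'), θ * c (y j) :=
        Finset.mul_sum _ _ _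
    _ ≤ ∑ j ∈ (Finset.range q).filter (fun j => y j ∉ O'),
          (f (insert (y j) (prefSet y j)) - f (prefSet y j)) := by
        apply Finset.sum_le_sum
        intro j hj
        simp only [Finset.mem_filter, Finset.mem_range] at hj
        exact hg j hj.1
    _ ≤ ∑ j ∈ Finset.range q,
          (f (insert (y j) (prefSet y j)) - f (prefSet y j)) := by
        apply Finset.sum_le_sum_of_subset_of_nonneg (Finset.filter_subset _ _)
        intro j hj _
        have h1 := hg j (Finset.mem_range.mp hj)
        have h2 := mul_nonneg hθ (hc (y j)).le
        linarith

lemma side_bound (f : Finset V → ℝ) (c : V → ℝ)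
    (hsub : ∀ A B : Finset V, A ⊆ B → ∀ e ∉ B,
      f (insert e A) - f A ≥ f (insert e B) - f B)
    (hnorm : f ∅ = 0) (hc : ∀ e, 0 < c e)
    (ε θX θY : ℝ) (hε1 : ε < 1) (hθY : 0 ≤ θY)
    (q : ℕ) (y : ℕ → V) (hinjy : Set.InjOn y (Set.Iio q))
    (X Y : Finset V) (hY : Y = prefSet y q) (hXY : Disjoint X Y)
    (O' : Finset V)
    (hgy : ∀ j < q, f (insert (y j) (prefSet y j)) - f (prefSet y j) ≥ θY * c (y j))
    (hexY : ∀ j < q, y j ∈ O' →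
      f (insert (y j) X) - f X ≤ f (insert (y j) (prefSet y j)) - f (prefSet y j))
    (houtX : ∀ e ∈ O' \ (X ∪ Y), f (insert e X) - f X ≤ θX * c e / (1 - ε))
    (hcY : ∑ e ∈ O' \ (X ∪ Y), c e ≤ ∑ e ∈ Y \ O', c e) :
    (f (O' ∪ X) - f X) * (1 - ε) ≤
      (f Y - θY * ∑ e ∈ O' \ (X ∪ Y), c e) * (1 - ε)
        + θX * ∑ e ∈ O' \ (X ∪ Y), c e := by
  have hd : (0:ℝ) < 1 - ε := by linarith
  have h0 : f (O' ∪ X) - f X ≤ ∑ e ∈ O' \ X, (f (insert e X) - f X) := by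
    rw [Finset.union_comm]; exact submod_union_le f hsub X O'
  have hdXY : ∀ a, a ∈ X → a ∉ Y := fun a ha => Finset.disjoint_left.mp hXY ha
  have hsplit : O' \ X = (O' ∩ Y) ∪ (O' \ (X ∪ Y)) := by
    ext e
    simp only [Finset.mem_sdiff, Finset.mem_union, Finset.mem_inter]
    constructor
    · intro h
      by_cases hYe : e ∈ Y
      · exact Or.inl ⟨h.1, hYe⟩
      · exact Or.inr ⟨h.1, fun hh => hh.elim h.2 hYe⟩
    · rintro (⟨h1, h2⟩ | ⟨h1, h2⟩)
      · exact ⟨h1, fun hx => hdXY e hx h2⟩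
      · exact ⟨h1, fun hx => h2 (Or.inl hx)⟩
  have hdisj : Disjoint (O' ∩ Y) (O' \ (X ∪ Y)) := by
    rw [Finset.disjoint_left]
    intro a ha hb
    simp only [Finset.mem_inter] at ha
    simp only [Finset.mem_sdiff, Finset.mem_union] at hb
    exact hb.2 (Or.inr ha.2)
  rw [hsplit, Finset.sum_union hdisj] at h0
  have himg : O' ∩ Y = ((Finset.range q).filter (fun j => y j ∈ O')).image y := by
    ext e
    simp only [Finset.mem_inter, Finset.mem_image, Finset.mem_filter,
      Finset.mem_range, hY, prefSet]
    constructor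
    · rintro ⟨hO, j, hj, rfl⟩
      exact ⟨j, ⟨hj, hO⟩, rfl⟩
    · rintro ⟨j, ⟨hj, hO⟩, rfl⟩
      exact ⟨hO, j, hj, rfl⟩
  have hinjT : ∀ a ∈ (Finset.range q).filter (fun j => y j ∈ O'),
      ∀ b ∈ (Finset.range q).filter (fun j => y j ∈ O'), y a = y b → a = b := by
    intro a ha b hb h
    simp only [Finset.mem_filter, Finset.mem_range] at ha hb
    exact hinjy (by simpa using ha.1) (by simpa using hb.1) h
  have h1 : ∑ e ∈ O' ∩ Y, (f (insert e X) - f X)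
      ≤ ∑ j ∈ (Finset.range q).filter (fun j => y j ∈ O'),
          (f (insert (y j) (prefSet y j)) - f (prefSet y j)) := by
    rw [himg, Finset.sum_image hinjT]
    apply Finset.sum_le_sum
    intro j hj
    simp only [Finset.mem_filter, Finset.mem_range] at hj
    exact hexY j hj.1 hj.2
  have hfY : f Y = ∑ j ∈ (Finset.range q).filter (fun j => y j ∈ O'),
        (f (insert (y j) (prefSet y j)) - f (prefSet y j))
      + ∑ j ∈ (Finset.range q).filter (fun j => y j ∉ O'),
        (f (insert (y j) (prefSet y j)) - f (prefSet y j)) := by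
    rw [hY, prefSet_telescope f hnorm,
      ← Finset.sum_filter_add_sum_filter_not (Finset.range q) (fun j => y j ∈ O')]
  have hge := ge_theta_sum f hnorm c hc θY hθY q y hinjy O' hgy
  have h3 : θY * (∑ e ∈ O' \ (X ∪ Y), c e)
      ≤ ∑ j ∈ (Finset.range q).filter (fun j => y j ∉ O'),
          (f (insert (y j) (prefSet y j)) - f (prefSet y j)) := by
    have hinjTc : ∀ a ∈ (Finset.range q).filter (fun j => y j ∉ O'),
        ∀ b ∈ (Finset.range q).filter (fun j => y j ∉ O'), y a = y b → a = b := by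
      intro a ha b hb h
      simp only [Finset.mem_filter, Finset.mem_range] at ha hb
      exact hinjy (by simpa using ha.1) (by simpa using hb.1) h
    have himg2 : Y \ O' = ((Finset.range q).filter (fun j => y j ∉ O')).image y := by
      ext e
      simp only [Finset.mem_sdiff, Finset.mem_image, Finset.mem_filter,
        Finset.mem_range, hY, prefSet]
      constructor
      · rintro ⟨⟨j, hj, rfl⟩, hO⟩
        exact ⟨j, ⟨hj, hO⟩, rfl⟩
      · rintro ⟨j, ⟨hj, hO⟩, rfl⟩
        exact ⟨⟨j, hj, rfl⟩, hO⟩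
    calc θY * (∑ e ∈ O' \ (X ∪ Y), c e) ≤ θY * ∑ e ∈ Y \ O', c e :=
          mul_le_mul_of_nonneg_left hcY hθY
      _ = ∑ j ∈ (Finset.range q).filter (fun j => y j ∉ O'), θY * c (y j) := by
          rw [himg2, Finset.sum_image hinjTc, Finset.mul_sum]
      _ ≤ _ := Finset.sum_le_sum (fun j hj => by
          simp only [Finset.mem_filter, Finset.mem_range] at hj
          exact hgy j hj.1)
  have h4 : ∑ e ∈ O' \ (X ∪ Y), (f (insert e X) - f X)
      ≤ θX * (∑ e ∈ O' \ (X ∪ Y), c e) / (1 - ε) := by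
    calc ∑ e ∈ O' \ (X ∪ Y), (f (insert e X) - f X)
        ≤ ∑ e ∈ O' \ (X ∪ Y), θX * c e / (1 - ε) := Finset.sum_le_sum houtX
      _ = θX * (∑ e ∈ O' \ (X ∪ Y), c e) / (1 - ε) := by
          rw [Finset.mul_sum, Finset.sum_div]
  have hfin : f (O' ∪ X) - f X
      ≤ f Y - θY * (∑ e ∈ O' \ (X ∪ Y), c e)
        + θX * (∑ e ∈ O' \ (X ∪ Y), c e) / (1 - ε) := by linarith
  calc (f (O' ∪ X) - f X) * (1 - ε)
      ≤ (f Y - θY * (∑ e ∈ O' \ (X ∪ Y), c e)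
        + θX * (∑ e ∈ O' \ (X ∪ Y), c e) / (1 - ε)) * (1 - ε) :=
        mul_le_mul_of_nonneg_right hfin hd.le
    _ = (f Y - θY * ∑ e ∈ O' \ (X ∪ Y), c e) * (1 - ε)
        + θX * ∑ e ∈ O' \ (X ∪ Y), c e := by
        field_simp

end aux

/-- With `f` submodular and normalized, positive costs `c`,
`ε ∈ (0,1)`, `θ_X, θ_Y > 0`, disjoint sets `X = {x_1,…,x_p}` and
`Y = {y_1,…,y_q}` built greedily with density thresholds `θ_X`, `θ_Y`, and
`O' ⊆ V` satisfying the stated exchange and cost conditions, we have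
`f(O' ∪ X) − f(X) + f(O' ∪ Y) − f(Y) ≤ (f(X) + f(Y))/(1−ε)`. -/
theorem smk_statement_5 {V : Type*} [Fintype V] [DecidableEq V]
    (f : Finset V → ℝ) (c : V → ℝ)
    (hsub : ∀ A B : Finset V, A ⊆ B → ∀ e ∉ B,
      f (insert e A) - f A ≥ f (insert e B) - f B)
    (hnorm : f ∅ = 0) (hc : ∀ e : V, 0 < c e)
    (ε θX θY : ℝ) (hε0 : 0 < ε) (hε1 : ε < 1) (hθX : 0 < θX) (hθY : 0 < θY)
    (p q : ℕ) (x y : ℕ → V)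
    (hinjx : Set.InjOn x (Set.Iio p)) (hinjy : Set.InjOn y (Set.Iio q))
    (X Y : Finset V) (hX : X = prefSet x p) (hY : Y = prefSet y q)
    (hXY : Disjoint X Y)
    (O' : Finset V)
    -- (i) greedy threshold conditions
    (hgx : ∀ i < p,
      f (insert (x i) (prefSet x i)) - f (prefSet x i) ≥ θX * c (x i))
    (hgy : ∀ j < q,
      f (insert (y j) (prefSet y j)) - f (prefSet y j) ≥ θY * c (y j))
    -- (ii) exchange conditions
    (hexY : ∀ j < q, y j ∈ O' →
      f (insert (y j) X) - f X ≤ f (insert (y j) (prefSet y j)) - f (prefSet y j))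
    (hexX : ∀ i < p, x i ∈ O' →
      f (insert (x i) Y) - f Y ≤ f (insert (x i) (prefSet x i)) - f (prefSet x i))
    -- (iii) small marginal density outside X ∪ Y
    (hout : ∀ e ∈ O' \ (X ∪ Y),
      f (insert e X) - f X ≤ θX * c e / (1 - ε) ∧
      f (insert e Y) - f Y ≤ θY * c e / (1 - ε))
    -- (iv) cost conditions
    (hcX : ∑ e ∈ O' \ (X ∪ Y), c e ≤ ∑ e ∈ X \ O', c e)
    (hcY : ∑ e ∈ O' \ (X ∪ Y), c e ≤ ∑ e ∈ Y \ O', c e) :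
    f (O' ∪ X) - f X + (f (O' ∪ Y) - f Y) ≤ (f X + f Y) / (1 - ε) := by
  have hd : (0:ℝ) < 1 - ε := by linarith
  have hUC : Y ∪ X = X ∪ Y := Finset.union_comm Y X
  have hA := side_bound f c hsub hnorm hc ε θX θY hε1 hθY.le q y hinjy X Y hY hXY O'
    hgy hexY (fun e he => (hout e he).1) hcY
  have hB := side_bound f c hsub hnorm hc ε θY θX hε1 hθX.le p x hinjx Y X hX hXY.symm O'
    hgx hexX (fun e he => (hout e (by rwa [hUC] at he)).2) (by rwa [hUC])
  rw [hUC] at hB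
  -- bounds f X ≥ θX * cOut and f Y ≥ θY * cOut
  have hfX : θX * (∑ e ∈ O' \ (X ∪ Y), c e) ≤ f X := by
    have h1 := ge_theta_sum f hnorm c hc θX hθX.le p x hinjx O' hgx
    rw [← hX] at h1
    have h2 : θX * (∑ e ∈ O' \ (X ∪ Y), c e) ≤ θX * ∑ e ∈ X \ O', c e :=
      mul_le_mul_of_nonneg_left hcX hθX.le
    linarith
  have hfY : θY * (∑ e ∈ O' \ (X ∪ Y), c e) ≤ f Y := by
    have h1 := ge_theta_sum f hnorm c hc θY hθY.le q y hinjy O' hgy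
    rw [← hY] at h1
    have h2 : θY * (∑ e ∈ O' \ (X ∪ Y), c e) ≤ θY * ∑ e ∈ Y \ O', c e :=
      mul_le_mul_of_nonneg_left hcY hθY.le
    linarith
  rw [le_div_iff₀ hd]
  have hkey : ε * (θX * (∑ e ∈ O' \ (X ∪ Y), c e) + θY * (∑ e ∈ O' \ (X ∪ Y), c e))
      ≤ ε * (f X + f Y) :=
    mul_le_mul_of_nonneg_left (add_le_add hfX hfY) hε0.le
  nlinarith [hA, hB, hkey]
end

section
/- Let θ ≥ 0. Let x_1, …, x_p be distinct elements of V forming X = {x_1,…,x_p} with prefixes X^i = {x_1,…,x_i}; for e = x_i write X^{<e} = X^{i−1}. Let Y, O ⊆ V with X ∩ Y = ∅. Assume: (i) f(x_i|X^{i−1}) ≥ 0 for every i; (ii) every e ∈ O ∩ X satisfies f(e|Y) ≤ f(e|X^{<e}); (iii) every e ∈ O \ (X ∪ Y) satisfies f(e|Y) ≤ θ·c(e). Then f(O ∪ Y) − f(Y) ≤ f(X) + θ·c(O \ (X ∪ Y)). -/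
lemma prefSet_succ_s6 {V : Type*} [DecidableEq V] (x : ℕ → V) (i : ℕ) :
    prefSet x (i + 1) = insert (x i) (prefSet x i) := by
  simp [prefSet, Finset.range_add_one]

lemma smk_sum_marginals {V : Type*} [DecidableEq V]
    (f : Finset V → ℝ)
    (hsub : ∀ A B : Finset V, A ⊆ B → ∀ e ∉ B,
      f (insert e A) - f A ≥ f (insert e B) - f B)
    (Y : Finset V) (A : Finset V) :
    f (A ∪ Y) - f Y ≤ ∑ e ∈ A \ Y, (f (insert e Y) - f Y) := by
  induction A using Finset.induction_on with
  | empty => simp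
  | @insert a A ha ih =>
    by_cases hay : a ∈ Y
    · have h1 : insert a A ∪ Y = A ∪ Y := by
        rw [Finset.insert_union, Finset.insert_eq_of_mem (Finset.mem_union_right _ hay)]
      have h2 : insert a A \ Y = A \ Y := Finset.insert_sdiff_of_mem A hay
      rw [h1, h2]; exact ih
    · by_cases haA : a ∈ A
      · rw [Finset.insert_eq_self.mpr haA] at *; exact ih
      · have h1 : insert a A ∪ Y = insert a (A ∪ Y) := by
          rw [Finset.insert_union]
        have h2 : insert a A \ Y = insert a (A \ Y) := by
          rw [Finset.insert_sdiff_of_notMem _ hay]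
        have haAY : a ∉ A ∪ Y := by simp [haA, hay]
        have hsub' := hsub Y (A ∪ Y) Finset.subset_union_right a haAY
        rw [h1, h2, Finset.sum_insert (by simp [haA])]
        have : f (insert a (A ∪ Y)) - f Y =
            (f (insert a (A ∪ Y)) - f (A ∪ Y)) + (f (A ∪ Y) - f Y) := by ring
        rw [this]
        exact add_le_add (le_of_le_of_eq hsub'.le rfl) ih

lemma smk_telescope {V : Type*} [DecidableEq V]
    (f : Finset V → ℝ) (hnorm : f ∅ = 0) (x : ℕ → V) (p : ℕ) :
    f (prefSet x p) =
      ∑ i ∈ Finset.range p, (f (insert (x i) (prefSet x i)) - f (prefSet x i)) := by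
  induction p with
  | zero => simp [prefSet, hnorm]
  | succ n ih =>
    rw [Finset.sum_range_succ, ← ih, prefSet_succ_s6]; ring

/-- With `f` submodular and normalized, positive costs `c`, `θ ≥ 0`,
`X = {x_1,…,x_p}` built with non-negative marginal gains, `Y, O ⊆ V` with
`X ∩ Y = ∅`, exchange condition on `O ∩ X` and threshold condition on
`O \ (X ∪ Y)`, we have `f(O ∪ Y) − f(Y) ≤ f(X) + θ·c(O \ (X ∪ Y))`. -/
theorem smk_statement_6 {V : Type*} [Fintype V] [DecidableEq V]
    (f : Finset V → ℝ) (c : V → ℝ)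
    (hsub : ∀ A B : Finset V, A ⊆ B → ∀ e ∉ B,
      f (insert e A) - f A ≥ f (insert e B) - f B)
    (hnorm : f ∅ = 0) (hc : ∀ e : V, 0 < c e)
    (θ : ℝ) (hθ : 0 ≤ θ)
    (p : ℕ) (x : ℕ → V) (hinjx : Set.InjOn x (Set.Iio p))
    (X : Finset V) (hX : X = prefSet x p)
    (Y O : Finset V) (hXY : Disjoint X Y)
    -- (i) non-negative marginal gains along X
    (hgx : ∀ i < p, 0 ≤ f (insert (x i) (prefSet x i)) - f (prefSet x i))
    -- (ii) exchange condition for elements of O ∩ X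
    (hex : ∀ i < p, x i ∈ O →
      f (insert (x i) Y) - f Y ≤ f (insert (x i) (prefSet x i)) - f (prefSet x i))
    -- (iii) threshold condition outside X ∪ Y
    (hout : ∀ e ∈ O \ (X ∪ Y), f (insert e Y) - f Y ≤ θ * c e) :
    f (O ∪ Y) - f Y ≤ f X + θ * ∑ e ∈ O \ (X ∪ Y), c e := by
  have hmain := smk_sum_marginals f hsub Y O
  -- split the sum
  have hsplit : ∑ e ∈ O \ Y, (f (insert e Y) - f Y)
      = ∑ e ∈ (O \ Y) ∩ X, (f (insert e Y) - f Y)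
        + ∑ e ∈ (O \ Y) \ X, (f (insert e Y) - f Y) :=
    (Finset.sum_inter_add_sum_sdiff (O \ Y) X _).symm
  have hOsd : (O \ Y) \ X = O \ (X ∪ Y) := by
    ext e; simp only [Finset.mem_sdiff, Finset.mem_union]; tauto
  -- first sum ≤ f X
  have hfirst : ∑ e ∈ (O \ Y) ∩ X, (f (insert e Y) - f Y) ≤ f X := by
    set I := (Finset.range p).filter (fun i => x i ∈ O \ Y) with hI
    have himg : (O \ Y) ∩ X = I.image x := by
      ext e
      simp only [Finset.mem_inter, Finset.mem_image, Finset.mem_filter,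
        Finset.mem_range, hX, prefSet, hI]
      constructor
      · rintro ⟨he, i, hi, rfl⟩; exact ⟨i, ⟨hi, he⟩, rfl⟩
      · rintro ⟨i, ⟨hi, he⟩, rfl⟩; exact ⟨he, i, hi, rfl⟩
    rw [himg, Finset.sum_image (fun a ha b hb hab =>
      hinjx (Finset.mem_range.mp (Finset.mem_filter.mp ha).1)
            (Finset.mem_range.mp (Finset.mem_filter.mp hb).1) hab)]
    calc ∑ i ∈ I, (f (insert (x i) Y) - f Y)
        ≤ ∑ i ∈ I, (f (insert (x i) (prefSet x i)) - f (prefSet x i)) := by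
          refine Finset.sum_le_sum fun i hi => ?_
          obtain ⟨hip, hio⟩ := Finset.mem_filter.mp hi
          exact hex i (Finset.mem_range.mp hip) (Finset.mem_sdiff.mp hio).1
      _ ≤ ∑ i ∈ Finset.range p, (f (insert (x i) (prefSet x i)) - f (prefSet x i)) := by
          refine Finset.sum_le_sum_of_subset_of_nonneg (Finset.filter_subset _ _)
            fun i hip _ => hgx i (Finset.mem_range.mp hip)
      _ = f X := by rw [hX, smk_telescope f hnorm]
  -- second sum ≤ θ * cost
  have hsecond : ∑ e ∈ O \ (X ∪ Y), (f (insert e Y) - f Y)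
      ≤ θ * ∑ e ∈ O \ (X ∪ Y), c e := by
    rw [Finset.mul_sum]
    exact Finset.sum_le_sum fun e he => hout e he
  calc f (O ∪ Y) - f Y ≤ ∑ e ∈ O \ Y, (f (insert e Y) - f Y) := hmain
    _ = _ + _ := hsplit
    _ ≤ f X + θ * ∑ e ∈ O \ (X ∪ Y), c e := by
        rw [hOsd]; exact add_le_add hfirst hsecond
end

section
/- Let θ ≥ 0. Let x_1, …, x_p and y_1, …, y_q be distinct elements of V forming disjoint sets X = {x_1,…,x_p} and Y = {y_1,…,y_q}, with prefixes X^i = {x_1,…,x_i} and Y^j = {y_1,…,y_j}; for e = x_i write X^{<e} = X^{i−1} and for e = y_j write Y^{<e} = Y^{j−1}. Let O ⊆ V. Assume: (i) f(x_i|X^{i−1}) ≥ 0 for every i and f(y_j|Y^{j−1}) ≥ 0 for every j; (ii) every e ∈ O ∩ Y satisfies f(e|X) ≤ f(e|Y^{<e}), and every e ∈ O ∩ X satisfies f(e|Y) ≤ f(e|X^{<e}); (iii) every e ∈ O \ (X ∪ Y) satisfies f(e|X) ≤ θ·c(e) and f(e|Y) ≤ θ·c(e). Then f(O) ≤ 2·f(X)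 + 2·f(Y) + 2·θ·c(O \ (X ∪ Y)). -/
lemma smk_sub_marg {V : Type*} [DecidableEq V] (f : Finset V → ℝ)
    (hsub : ∀ A B : Finset V, A ⊆ B → ∀ e ∉ B,
      f (insert e A) - f A ≥ f (insert e B) - f B)
    (S T : Finset V) (hST : S ⊆ T) (C : Finset V) :
    Disjoint C T → f (T ∪ C) - f T ≤ f (S ∪ C) - f S := by
  induction C using Finset.induction_on with
  | empty => simp
  | @insert a C ha ih =>
    intro hd
    have haT : a ∉ T := Finset.disjoint_left.mp hd (Finset.mem_insert_self a C)
    have haTC : a ∉ T ∪ C := by simp [haT, ha]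
    have h1 := hsub (S ∪ C) (T ∪ C) (Finset.union_subset_union hST le_rfl) a haTC
    have h2 := ih (Finset.disjoint_of_subset_left (Finset.subset_insert a C) hd)
    have e1 : T ∪ insert a C = insert a (T ∪ C) := Finset.union_insert ..
    have e2 : S ∪ insert a C = insert a (S ∪ C) := Finset.union_insert ..
    rw [e1, e2]; linarith

lemma smk_marg_sum {V : Type*} [DecidableEq V] (f : Finset V → ℝ)
    (hsub : ∀ A B : Finset V, A ⊆ B → ∀ e ∉ B,
      f (insert e A) - f A ≥ f (insert e B) - f B)
    (S D : Finset V) :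
    Disjoint D S → f (S ∪ D) ≤ f S + ∑ e ∈ D, (f (insert e S) - f S) := by
  induction D using Finset.induction_on with
  | empty => simp
  | @insert a D ha ih =>
    intro hd
    have haS : a ∉ S := Finset.disjoint_left.mp hd (Finset.mem_insert_self a D)
    have haSD : a ∉ S ∪ D := by simp [haS, ha]
    have h1 := hsub S (S ∪ D) Finset.subset_union_left a haSD
    have h2 := ih (Finset.disjoint_of_subset_left (Finset.subset_insert a D) hd)
    have e1 : S ∪ insert a D = insert a (S ∪ D) := Finset.union_insert ..
    rw [e1, Finset.sum_insert ha]; linarith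

lemma smk_key {V : Type*} [DecidableEq V] (f : Finset V → ℝ) (c : V → ℝ)
    (hsub : ∀ A B : Finset V, A ⊆ B → ∀ e ∉ B,
      f (insert e A) - f A ≥ f (insert e B) - f B)
    (hnorm : f ∅ = 0) (θ : ℝ)
    (q : ℕ) (y : ℕ → V) (hinjy : Set.InjOn y (Set.Iio q))
    (X Y O : Finset V) (hY : Y = prefSet y q) (hXY : Disjoint X Y)
    (hgy : ∀ j < q, 0 ≤ f (insert (y j) (prefSet y j)) - f (prefSet y j))
    (hexY : ∀ j < q, y j ∈ O →
      f (insert (y j) X) - f X ≤ f (insert (y j) (prefSet y j)) - f (prefSet y j))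
    (hout : ∀ e ∈ O \ (X ∪ Y), f (insert e X) - f X ≤ θ * c e) :
    f (O ∪ X) ≤ f X + f Y + θ * ∑ e ∈ O \ (X ∪ Y), c e := by
  have hOX : O ∪ X = X ∪ (O \ X) := by
    ext e; simp; tauto
  have hdisj : Disjoint (O \ X) X := Finset.sdiff_disjoint
  have h1 : f (O ∪ X) ≤ f X + ∑ e ∈ O \ X, (f (insert e X) - f X) := by
    rw [hOX]; exact smk_marg_sum f hsub X (O \ X) hdisj
  -- split the sum
  have hsplit : O \ X = (O ∩ Y) ∪ (O \ (X ∪ Y)) := by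
    ext e
    simp only [Finset.mem_sdiff, Finset.mem_inter, Finset.mem_union]
    constructor
    · rintro ⟨hO, hX⟩
      by_cases hYe : e ∈ Y
      · exact Or.inl ⟨hO, hYe⟩
      · exact Or.inr ⟨hO, by tauto⟩
    · rintro (⟨hO, hYe⟩ | ⟨hO, h⟩)
      · exact ⟨hO, fun hXe => Finset.disjoint_left.mp hXY hXe hYe⟩
      · exact ⟨hO, fun hXe => h (Or.inl hXe)⟩
  have hdisj2 : Disjoint (O ∩ Y) (O \ (X ∪ Y)) := by
    rw [Finset.disjoint_left]
    intro e he he'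
    simp only [Finset.mem_inter] at he
    simp only [Finset.mem_sdiff, Finset.mem_union] at he'
    exact he'.2 (Or.inr he.2)
  have hsum : ∑ e ∈ O \ X, (f (insert e X) - f X)
      = ∑ e ∈ O ∩ Y, (f (insert e X) - f X)
        + ∑ e ∈ O \ (X ∪ Y), (f (insert e X) - f X) := by
    rw [hsplit, Finset.sum_union hdisj2]
  -- bound the Y-part
  have himg : O ∩ Y = Finset.image y ((Finset.range q).filter (fun j => y j ∈ O)) := by
    ext e
    simp only [Finset.mem_inter, Finset.mem_image, Finset.mem_filter, Finset.mem_range, hY,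
      prefSet]
    constructor
    · rintro ⟨hO, j, hj, rfl⟩
      exact ⟨j, ⟨hj, hO⟩, rfl⟩
    · rintro ⟨j, ⟨hj, hO⟩, rfl⟩
      exact ⟨hO, j, hj, rfl⟩
  have hYtel : ∑ j ∈ Finset.range q,
      (f (insert (y j) (prefSet y j)) - f (prefSet y j)) = f Y := by
    have hpref : ∀ j, insert (y j) (prefSet y j) = prefSet y (j + 1) := by
      intro j
      simp [prefSet, Finset.range_add_one]
    have := Finset.sum_range_sub (fun j => f (prefSet y j)) q
    calc ∑ j ∈ Finset.range q, (f (insert (y j) (prefSet y j)) - f (prefSet y j))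
        = ∑ j ∈ Finset.range q, (f (prefSet y (j + 1)) - f (prefSet y j)) := by
          simp_rw [hpref]
      _ = f (prefSet y q) - f (prefSet y 0) := this
      _ = f Y := by simp [prefSet, hnorm, hY]
  have hYpart : ∑ e ∈ O ∩ Y, (f (insert e X) - f X) ≤ f Y := by
    rw [himg, Finset.sum_image (fun i hi j hj hij => hinjy
      (by simp at hi; exact hi.1) (by simp at hj; exact hj.1) hij)]
    calc ∑ j ∈ (Finset.range q).filter (fun j => y j ∈ O), (f (insert (y j) X) - f X)
        ≤ ∑ j ∈ (Finset.range q).filter (fun j => y j ∈ O),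
            (f (insert (y j) (prefSet y j)) - f (prefSet y j)) := by
          apply Finset.sum_le_sum
          intro j hj
          simp only [Finset.mem_filter, Finset.mem_range] at hj
          exact hexY j hj.1 hj.2
      _ ≤ ∑ j ∈ Finset.range q, (f (insert (y j) (prefSet y j)) - f (prefSet y j)) := by
          apply Finset.sum_le_sum_of_subset_of_nonneg (Finset.filter_subset _ _)
          intro j hj _
          exact hgy j (Finset.mem_range.mp hj)
      _ = f Y := hYtel
  have houtpart : ∑ e ∈ O \ (X ∪ Y), (f (insert e X) - f X)
      ≤ θ * ∑ e ∈ O \ (X ∪ Y), c e := by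
    rw [Finset.mul_sum]
    exact Finset.sum_le_sum fun e he => hout e he
  linarith

/-- With `f` submodular, non-negative and normalized, positive
costs `c`, `θ ≥ 0`, disjoint `X = {x_1,…,x_p}` and `Y = {y_1,…,y_q}` built with
non-negative marginal gains, exchange conditions on `O ∩ X`, `O ∩ Y` and
threshold conditions outside `X ∪ Y`, we have
`f(O) ≤ 2·f(X) + 2·f(Y) + 2·θ·c(O \ (X ∪ Y))`. -/
theorem smk_statement_8 {V : Type*} [Fintype V] [DecidableEq V]
    (f : Finset V → ℝ) (c : V → ℝ)
    (hsub : ∀ A B : Finset V, A ⊆ B → ∀ e ∉ B,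
      f (insert e A) - f A ≥ f (insert e B) - f B)
    (hnonneg : ∀ S : Finset V, 0 ≤ f S) (hnorm : f ∅ = 0)
    (hc : ∀ e : V, 0 < c e)
    (θ : ℝ) (hθ : 0 ≤ θ)
    (p q : ℕ) (x y : ℕ → V)
    (hinjx : Set.InjOn x (Set.Iio p)) (hinjy : Set.InjOn y (Set.Iio q))
    (X Y : Finset V) (hX : X = prefSet x p) (hY : Y = prefSet y q)
    (hXY : Disjoint X Y)
    (O : Finset V)
    -- (i) non-negative marginal gains along X and Y
    (hgx : ∀ i < p, 0 ≤ f (insert (x i) (prefSet x i)) - f (prefSet x i))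
    (hgy : ∀ j < q, 0 ≤ f (insert (y j) (prefSet y j)) - f (prefSet y j))
    -- (ii) exchange conditions
    (hexY : ∀ j < q, y j ∈ O →
      f (insert (y j) X) - f X ≤ f (insert (y j) (prefSet y j)) - f (prefSet y j))
    (hexX : ∀ i < p, x i ∈ O →
      f (insert (x i) Y) - f Y ≤ f (insert (x i) (prefSet x i)) - f (prefSet x i))
    -- (iii) threshold conditions outside X ∪ Y
    (hout : ∀ e ∈ O \ (X ∪ Y),
      f (insert e X) - f X ≤ θ * c e ∧ f (insert e Y) - f Y ≤ θ * c e) :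
    f O ≤ 2 * f X + 2 * f Y + 2 * θ * ∑ e ∈ O \ (X ∪ Y), c e := by
  have hsymm : O \ (Y ∪ X) = O \ (X ∪ Y) := by rw [Finset.union_comm]
  have hkX : f (O ∪ X) ≤ f X + f Y + θ * ∑ e ∈ O \ (X ∪ Y), c e :=
    smk_key f c hsub hnorm θ q y hinjy X Y O hY hXY hgy hexY
      (fun e he => (hout e he).1)
  have hkY : f (O ∪ Y) ≤ f Y + f X + θ * ∑ e ∈ O \ (X ∪ Y), c e := by
    have := smk_key f c hsub hnorm θ p x hinjx Y X O hX hXY.symm hgx hexX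
      (fun e he => (hout e (hsymm ▸ he)).2)
    rwa [hsymm] at this
  -- f O ≤ f (O ∪ X) + f (O ∪ Y)
  have hC : Disjoint (X \ O) (O ∪ Y) := by
    rw [Finset.disjoint_left]
    intro e he h
    simp only [Finset.mem_sdiff] at he
    rcases Finset.mem_union.mp h with h | h
    · exact he.2 h
    · exact Finset.disjoint_left.mp hXY he.1 h
  have hsm := smk_sub_marg f hsub O (O ∪ Y) Finset.subset_union_left (X \ O) hC
  have e1 : (O ∪ Y) ∪ (X \ O) = O ∪ X ∪ Y := by
    ext e
    simp only [Finset.mem_union, Finset.mem_sdiff]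
    constructor
    · rintro ((h | h) | ⟨h, _⟩) <;> tauto
    · rintro ((h | h) | h)
      · tauto
      · by_cases he : e ∈ O <;> tauto
      · tauto
  have e2 : O ∪ (X \ O) = O ∪ X := by
    ext e
    simp only [Finset.mem_union, Finset.mem_sdiff]
    constructor
    · tauto
    · rintro (h | h)
      · tauto
      · by_cases he : e ∈ O <;> tauto
  rw [e1, e2] at hsm
  have h0 := hnonneg (O ∪ X ∪ Y)
  linarith
end
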